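/- Let R be a ring and A a right ideal of R with a serial factorization. Then R/A is a Bézout right R-module, i.e., every finitely generated R-submodule of R/A is cyclic. -/

import Mathlib

open MulOpposite

universe u

/-- The product `A·B` of two right ideals of `R` (right ideals are `Rᵐᵒᵖ`-submodules of `R`):
the set of all finite sums of products `a * b` with `a ∈ A`, `b ∈ B`. -/
def rmul {R : Type u} [Ring R] (A B : Submodule Rᵐᵒᵖ R) : Submodule Rᵐᵒᵖ R :=
  Submodule.span Rᵐᵒᵖ {x : R | ∃ a ∈ A, ∃ b ∈ B, x = a * b}

/-- The product `A₁⋯Aₙ` of a (possibly empty) list of right ideals. -/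
def rprod {R : Type u} [Ring R] : List (Submodule Rᵐᵒᵖ R) → Submodule Rᵐᵒᵖ R
  | [] => ⊤
  | [A] => A
  | A :: l => rmul A (rprod l)

/-- A finite family of right ideals is coindependent if `Aᵢ + ⋂_{j ≠ i} Aⱼ = R` for every `i`. -/
def Coindep {R : Type u} [Ring R] {n : ℕ} (A : Fin n → Submodule Rᵐᵒᵖ R) : Prop :=
  ∀ i, A i ⊔ (⨅ j, ⨅ (_ : j ≠ i), A j) = ⊤

/-- A module is uniserial if its submodules are linearly ordered by inclusion. -/
def IsUniserialMod (S : Type*) [Ring S] (M : Type*) [AddCommGroup M] [Module S M] : Prop :=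
  ∀ N P : Submodule S M, N ≤ P ∨ P ≤ N

/-- A right ideal is a two-sided ideal if it is also closed under left multiplication. -/
def IsTwoSidedRid {R : Type u} [Ring R] (A : Submodule Rᵐᵒᵖ R) : Prop :=
  ∀ (r : R), ∀ x ∈ A, r * x ∈ A

/-- A serial factorization of a right ideal `A`: a factorization `A = A₁⋯Aₙ` into proper
right ideals that pairwise commute, form a coindependent family, and are such that every
quotient `R/Aᵢ` is a uniserial right `R`-module. -/
def IsSerialFact {R : Type u} [Ring R] {n : ℕ} (A : Submodule Rᵐᵒᵖ R)
    (F : Fin n → Submodule Rᵐᵒᵖ R) : Prop :=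
  (∀ i, F i ≠ ⊤) ∧ (∀ i j, rmul (F i) (F j) = rmul (F j) (F i)) ∧ Coindep F ∧
    (∀ i, IsUniserialMod Rᵐᵒᵖ (R ⧸ F i)) ∧ A = rprod (List.ofFn F)

/-- A right ideal has a serial factorization if it admits one of some length. -/
def HasSerialFact {R : Type u} [Ring R] (A : Submodule Rᵐᵒᵖ R) : Prop :=
  ∃ (n : ℕ) (F : Fin n → Submodule Rᵐᵒᵖ R), IsSerialFact A F

/-- A right chain ring: its right ideals are linearly ordered by inclusion. -/
def IsRightChainRing (R : Type u) [Ring R] : Prop :=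
  ∀ A B : Submodule Rᵐᵒᵖ R, A ≤ B ∨ B ≤ A

/-- A ring is right duo if every right ideal is a two-sided ideal. -/
def IsRightDuo (R : Type u) [Ring R] : Prop :=
  ∀ A : Submodule Rᵐᵒᵖ R, IsTwoSidedRid A

/-- The principal right ideal `rR`. -/
def rspan {R : Type u} [Ring R] (r : R) : Submodule Rᵐᵒᵖ R :=
  Submodule.span Rᵐᵒᵖ ({r} : Set R)

/-! When `n ≠ 1`, each factor `Aᵢ` is comaximal with some `Aⱼ` and `AⱼAᵢ = AᵢAⱼ ⊆ Aᵢ`, so every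
`Aᵢ` is a two-sided ideal; then `⋂ Aᵢ ⊆ A₁⋯Aₙ = A`, and the `Aᵢ` obey the Chinese remainder
theorem. Given `b₁, b₂ ∈ R`, uniseriality of `R/Aᵢ` says that one of them lies in the right ideal
generated by the other modulo `Aᵢ`. Splitting `1 = u + (1 - u)` along the indices where `b₁`
dominates, `b = b₁(1 - u) + b₂u` is congruent to the dominant one modulo each `Aᵢ`, so
`b₁R + b₂R ⊆ bR + Aᵢ` for all `i`, hence `b₁R + b₂R + A = bR + A`. When `n = 1`, `R/A` is
uniserial, hence Bézout. -/

open scoped Pointwise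

section Lattice

variable {α : Type*} [Lattice α] [BoundedOrder α] [IsModularLattice α]

lemma inf_sup_eq_top_of_sup_inf_eq_top {a b c : α} (h₁ : a ⊔ b ⊓ c = ⊤) (h₂ : b ⊔ a ⊓ c = ⊤) :
    a ⊓ b ⊔ c = ⊤ := by
  have ha : a ≤ a ⊓ b ⊔ c := by
    calc a = a ⊓ (b ⊔ a ⊓ c) := by rw [h₂, inf_top_eq]
      _ = a ⊓ b ⊔ a ⊓ c := (inf_sup_assoc_of_le _ inf_le_left).symm
      _ ≤ a ⊓ b ⊔ c := sup_le_sup_left inf_le_right _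
  rw [eq_top_iff, ← h₁]
  exact sup_le ha (inf_le_right.trans le_sup_right)

end Lattice

section Modules

variable {S M : Type*} [Semiring S] [AddCommMonoid M] [Module S M]

lemma exists_eq_span_singleton_of_fg
    (h : ∀ x y : M, ∃ z, Submodule.span S {x} ⊔ Submodule.span S {y} = Submodule.span S {z})
    {N : Submodule S M} (hN : N.FG) : ∃ z, N = Submodule.span S {z} := by
  classical
  obtain ⟨t, rfl⟩ := hN
  induction t using Finset.induction_on with
  | empty => exact ⟨0, by simp⟩
  | insert a t _ ih =>
    obtain ⟨y, hy⟩ := ih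
    rw [Finset.coe_insert, Submodule.span_insert, hy]
    exact h a y

end Modules

namespace IsUniserialMod

variable {S M : Type*} [Ring S] [AddCommGroup M] [Module S M]

lemma exists_sup_span_singleton_eq (h : IsUniserialMod S M) (x y : M) :
    ∃ z, Submodule.span S {x} ⊔ Submodule.span S {y} = Submodule.span S {z} := by
  rcases h (Submodule.span S {x}) (Submodule.span S {y}) with hxy | hyx
  · exact ⟨y, sup_eq_right.2 hxy⟩
  · exact ⟨x, sup_eq_left.2 hyx⟩

lemma le_or_le_of_quotient {F : Submodule S M} (h : IsUniserialMod S (M ⧸ F))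
    {P Q : Submodule S M} (hP : F ≤ P) (hQ : F ≤ Q) : P ≤ Q ∨ Q ≤ P := by
  have hcomap : ∀ {P Q : Submodule S M}, F ≤ P → F ≤ Q → P.map F.mkQ ≤ Q.map F.mkQ → P ≤ Q :=
    fun hP hQ hle => by
      simpa [Submodule.comap_map_mkQ, sup_eq_right.2 hP, sup_eq_right.2 hQ] using
        Submodule.comap_mono (f := F.mkQ) hle
  exact (h (P.map F.mkQ) (Q.map F.mkQ)).imp (hcomap hP hQ) (hcomap hQ hP)

end IsUniserialMod

section RightIdeals

variable {R : Type u} [Ring R]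

lemma RightIdeal.mul_mem_right {A : Submodule Rᵐᵒᵖ R} {a : R} (ha : a ∈ A) (b : R) :
    a * b ∈ A := by
  simpa using A.smul_mem (op b) ha

lemma exists_add_eq_one_of_sup_eq_top {A B : Submodule Rᵐᵒᵖ R} (h : A ⊔ B = ⊤) :
    ∃ a ∈ A, ∃ b ∈ B, a + b = 1 :=
  Submodule.mem_sup.1 (h ▸ Submodule.mem_top)

lemma mem_rspan_self (b : R) : b ∈ rspan b := Submodule.mem_span_singleton_self b

lemma rspan_sup_eq_of_sub_mem {F : Submodule Rᵐᵒᵖ R} {b b' : R} (h : b - b' ∈ F) :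
    rspan b ⊔ F = rspan b' ⊔ F := by
  have hle : ∀ {b b' : R}, b - b' ∈ F → rspan b ⊔ F ≤ rspan b' ⊔ F := fun {b b'} h => by
    refine sup_le ((Submodule.span_singleton_le_iff_mem _ _).2 ?_) le_sup_right
    simpa using Submodule.add_mem_sup (mem_rspan_self b') h
  exact le_antisymm (hle h) (hle (by simpa using F.neg_mem h))

lemma mem_rmul {A B : Submodule Rᵐᵒᵖ R} {a b : R} (ha : a ∈ A) (hb : b ∈ B) :
    a * b ∈ rmul A B :=
  Submodule.subset_span ⟨a, ha, b, hb, rfl⟩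

lemma rmul_le {A B C : Submodule Rᵐᵒᵖ R} (h : ∀ a ∈ A, ∀ b ∈ B, a * b ∈ C) :
    rmul A B ≤ C :=
  Submodule.span_le.2 fun _ ⟨a, ha, b, hb, hx⟩ => hx ▸ h a ha b hb

lemma rmul_le_left {A B : Submodule Rᵐᵒᵖ R} : rmul A B ≤ A :=
  rmul_le fun _ ha b _ => RightIdeal.mul_mem_right ha b

lemma rmul_top (A : Submodule Rᵐᵒᵖ R) : rmul A ⊤ = A :=
  le_antisymm rmul_le_left fun a ha => by simpa using mem_rmul ha (Submodule.mem_top (x := 1))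

lemma top_rmul {A : Submodule Rᵐᵒᵖ R} (hA : IsTwoSidedRid A) : rmul ⊤ A = A :=
  le_antisymm (rmul_le fun r _ a ha => hA r a ha)
    fun a ha => by simpa using mem_rmul (Submodule.mem_top (x := 1)) ha

lemma toAddSubmonoid_rmul (A B : Submodule Rᵐᵒᵖ R) :
    (rmul A B).toAddSubmonoid = A.toAddSubmonoid * B.toAddSubmonoid := by
  refine le_antisymm (fun x hx => ?_) (AddSubmonoid.mul_le.2 fun a ha b hb => mem_rmul ha hb)
  induction hx using Submodule.span_induction with
  | mem x hx =>
    obtain ⟨a, ha, b, hb, rfl⟩ := hx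
    exact AddSubmonoid.mul_mem_mul ha hb
  | zero => exact zero_mem _
  | add x y _ _ hx hy => exact add_mem hx hy
  | smul r x _ hx =>
    change x * r.unop ∈ _
    refine AddSubmonoid.mul_induction_on hx (fun a ha b hb => ?_) fun y z hy hz => ?_
    · simpa [mul_assoc] using AddSubmonoid.mul_mem_mul ha (RightIdeal.mul_mem_right hb r.unop)
    · simpa [add_mul] using add_mem hy hz

lemma rmul_assoc (A B C : Submodule Rᵐᵒᵖ R) : rmul (rmul A B) C = rmul A (rmul B C) :=
  Submodule.toAddSubmonoid_injective <| by simp only [toAddSubmonoid_rmul, mul_assoc]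

lemma rprod_cons (A : Submodule Rᵐᵒᵖ R) (l : List (Submodule Rᵐᵒᵖ R)) :
    rprod (A :: l) = rmul A (rprod l) := by
  cases l with
  | nil => exact (rmul_top A).symm
  | cons B t => rfl

lemma rmul_rprod_comm {B : Submodule Rᵐᵒᵖ R} (hB : IsTwoSidedRid B)
    {l : List (Submodule Rᵐᵒᵖ R)} (h : ∀ X ∈ l, rmul B X = rmul X B) :
    rmul B (rprod l) = rmul (rprod l) B := by
  induction l with
  | nil => exact (rmul_top B).trans (top_rmul hB).symm
  | cons X t ih =>
    rw [rprod_cons, ← rmul_assoc, h X List.mem_cons_self, rmul_assoc,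
      ih fun Y hY => h Y (List.mem_cons_of_mem X hY), ← rmul_assoc]

lemma inf_le_rmul_of_sup_eq_top {A B : Submodule Rᵐᵒᵖ R} (h : A ⊔ B = ⊤)
    (hBA : rmul B A ≤ rmul A B) : A ⊓ B ≤ rmul A B := by
  rintro x ⟨hxA, hxB⟩
  obtain ⟨a, ha, b, hb, hab⟩ := exists_add_eq_one_of_sup_eq_top h
  have hx : x = a * x + b * x := by rw [← add_mul, hab, one_mul]
  rw [hx]
  exact add_mem (mem_rmul ha hxB) (hBA (mem_rmul hb hxA))

lemma isTwoSidedRid_of_sup_eq_top {A B : Submodule Rᵐᵒᵖ R} (h : A ⊔ B = ⊤)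
    (hBA : rmul B A ≤ A) : IsTwoSidedRid A := by
  intro r x hx
  obtain ⟨a, ha, b, hb, rfl⟩ := Submodule.mem_sup.1 (h ▸ Submodule.mem_top (x := r))
  rw [add_mul]
  exact add_mem (RightIdeal.mul_mem_right ha x) (hBA (mem_rmul hb hx))

lemma mul_mem_sup_inf {A B C : Submodule Rᵐᵒᵖ R} (hA : IsTwoSidedRid A) {x u : R}
    (hx : x ∈ C ⊔ B) (hu : u ∈ A) : x * u ∈ C ⊔ A ⊓ B := by
  obtain ⟨c, hc, b, hb, rfl⟩ := Submodule.mem_sup.1 hx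
  rw [add_mul]
  exact Submodule.add_mem_sup (RightIdeal.mul_mem_right hc u)
    ⟨hA b u hu, RightIdeal.mul_mem_right hb u⟩

lemma sup_inf_sup_le_of_sup_eq_top {A B C : Submodule Rᵐᵒᵖ R} (hA : IsTwoSidedRid A)
    (hB : IsTwoSidedRid B) (h : A ⊔ B = ⊤) : (C ⊔ A) ⊓ (C ⊔ B) ≤ C ⊔ A ⊓ B := by
  rintro x ⟨hxA, hxB⟩
  obtain ⟨u, hu, v, hv, huv⟩ := exists_add_eq_one_of_sup_eq_top h
  have hx : x = x * u + x * v := by rw [← mul_add, huv, mul_one]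
  rw [hx]
  exact add_mem (mul_mem_sup_inf hA hxB hu) (inf_comm A B ▸ mul_mem_sup_inf hB hxA hv)

namespace Coindep

variable {n : ℕ} {F : Fin n → Submodule Rᵐᵒᵖ R}

lemma sup_biInf_eq_top (hco : Coindep F) {i : Fin n} {s : Finset (Fin n)} (hi : i ∉ s) :
    F i ⊔ ⨅ j ∈ s, F j = ⊤ := by
  rw [eq_top_iff, ← hco i]
  refine sup_le_sup_left (le_iInf₂ fun j hj => iInf_le_of_le j (iInf_le _ ?_)) _
  rintro rfl
  exact hi hj

lemma sup_eq_top (hco : Coindep F) {i j : Fin n} (hij : i ≠ j) : F i ⊔ F j = ⊤ := by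
  simpa using hco.sup_biInf_eq_top (s := {j}) (by simpa using hij)

lemma isTwoSidedRid (hco : Coindep F) (hcomm : ∀ i j, rmul (F i) (F j) = rmul (F j) (F i))
    {i j : Fin n} (hij : i ≠ j) : IsTwoSidedRid (F i) :=
  isTwoSidedRid_of_sup_eq_top (hco.sup_eq_top hij) ((hcomm j i).le.trans rmul_le_left)

lemma comp_injective (hco : Coindep F) {m : ℕ} {e : Fin m → Fin n} (he : Function.Injective e) :
    Coindep (F ∘ e) := by
  intro i
  rw [eq_top_iff, ← hco (e i)]
  exact sup_le_sup_left (le_iInf₂ fun j hji => iInf_le_of_le (e j) (iInf_le _ (he.ne hji))) _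

lemma biInf_sup_biInf_compl_eq_top (hco : Coindep F) (s : Finset (Fin n)) :
    (⨅ i ∈ s, F i) ⊔ ⨅ i ∈ sᶜ, F i = ⊤ := by
  classical
  induction s using Finset.induction_on with
  | empty => simp
  | insert i s hi ih =>
    have hcompl : sᶜ = insert i (insert i s)ᶜ := by
      rw [Finset.compl_insert, Finset.insert_erase (Finset.mem_compl.2 hi)]
    rw [hcompl, Finset.iInf_insert] at ih
    rw [Finset.iInf_insert]
    refine inf_sup_eq_top_of_sup_inf_eq_top ?_ ih
    rw [← Finset.iInf_union]
    exact hco.sup_biInf_eq_top (by simp [hi])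

lemma iInf_sup_le (hco : Coindep F) (htwo : ∀ i, IsTwoSidedRid (F i))
    (C : Submodule Rᵐᵒᵖ R) : ⨅ i, (C ⊔ F i) ≤ C ⊔ ⨅ i, F i := by
  classical
  suffices ∀ s : Finset (Fin n), ⨅ i ∈ s, (C ⊔ F i) ≤ C ⊔ ⨅ i ∈ s, F i by
    simpa using this Finset.univ
  intro s
  induction s using Finset.induction_on with
  | empty => simp
  | insert i s hi ih =>
    have htwo_s : IsTwoSidedRid (⨅ j ∈ s, F j) := fun r x hx => by
      simp only [Submodule.mem_iInf] at hx ⊢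
      exact fun j hj => htwo j r x (hx j hj)
    rw [Finset.iInf_insert, Finset.iInf_insert]
    exact (inf_le_inf_left _ ih).trans
      (sup_inf_sup_le_of_sup_eq_top (htwo i) htwo_s (hco.sup_biInf_eq_top hi))

lemma iInf_le_rprod_ofFn (hco : Coindep F) (htwo : ∀ i, IsTwoSidedRid (F i))
    (hcomm : ∀ i j, rmul (F i) (F j) = rmul (F j) (F i)) : ⨅ i, F i ≤ rprod (List.ofFn F) := by
  induction n with
  | zero => exact le_top
  | succ n ih =>
    set P := rprod (List.ofFn fun i : Fin n => F i.succ)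
    have hP : ⨅ i : Fin n, F i.succ ≤ P :=
      ih (hco.comp_injective (Fin.succ_injective n)) (fun i => htwo _) fun i j => hcomm _ _
    have hsup : F 0 ⊔ P = ⊤ := by
      refine eq_top_iff.2 ((hco 0).symm.le.trans (sup_le_sup_left (le_trans ?_ hP) _))
      exact le_iInf fun i => iInf_le_of_le i.succ (iInf_le _ (Fin.succ_ne_zero i))
    have hcommP : rmul (F 0) P = rmul P (F 0) := by
      refine rmul_rprod_comm (htwo 0) fun X hX => ?_
      obtain ⟨i, rfl⟩ := List.mem_ofFn.1 hX
      exact hcomm _ _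
    rw [List.ofFn_succ, rprod_cons]
    calc ⨅ i, F i ≤ F 0 ⊓ ⨅ i : Fin n, F i.succ :=
          le_inf (iInf_le _ 0) (le_iInf fun i => iInf_le _ i.succ)
      _ ≤ F 0 ⊓ P := inf_le_inf_left _ hP
      _ ≤ rmul (F 0) P := inf_le_rmul_of_sup_eq_top hsup hcommP.ge

end Coindep

lemma exists_rspan_sup_eq {n : ℕ} {F : Fin n → Submodule Rᵐᵒᵖ R} (hco : Coindep F)
    (htwo : ∀ i, IsTwoSidedRid (F i)) (huni : ∀ i, IsUniserialMod Rᵐᵒᵖ (R ⧸ F i))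
    {A : Submodule Rᵐᵒᵖ R} (hA : ⨅ i, F i ≤ A) (b₁ b₂ : R) :
    ∃ b, rspan b₁ ⊔ rspan b₂ ⊔ A = rspan b ⊔ A := by
  classical
  set s := Finset.univ.filter fun i => rspan b₂ ⊔ F i ≤ rspan b₁ ⊔ F i
  obtain ⟨u, hu, e, he, hue⟩ :=
    exists_add_eq_one_of_sup_eq_top (hco.biInf_sup_biInf_compl_eq_top s)
  obtain rfl : e = 1 - u := eq_sub_of_add_eq' hue
  simp only [Submodule.mem_iInf, Finset.mem_compl] at hu he
  set b := b₁ * (1 - u) + b₂ * u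
  have hb : b ∈ rspan b₁ ⊔ rspan b₂ :=
    Submodule.add_mem_sup (RightIdeal.mul_mem_right (mem_rspan_self b₁) _)
      (RightIdeal.mul_mem_right (mem_rspan_self b₂) _)
  have hlocal : ∀ i, rspan b₁ ⊔ rspan b₂ ≤ rspan b ⊔ F i := by
    intro i
    by_cases hi : i ∈ s
    · have hb₁ : b - b₁ = (b₂ - b₁) * u := by simp only [b]; noncomm_ring
      rw [rspan_sup_eq_of_sub_mem (F := F i) (hb₁ ▸ htwo i _ u (hu i hi))]
      exact sup_le le_sup_left (le_sup_left.trans (Finset.mem_filter.1 hi).2)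
    · have hb₂ : b - b₂ = (b₁ - b₂) * (1 - u) := by simp only [b]; noncomm_ring
      rw [rspan_sup_eq_of_sub_mem (F := F i) (hb₂ ▸ htwo i _ _ (he i hi))]
      have hle : rspan b₁ ⊔ F i ≤ rspan b₂ ⊔ F i :=
        ((huni i).le_or_le_of_quotient le_sup_right le_sup_right).resolve_right
          fun h => hi (Finset.mem_filter.2 ⟨Finset.mem_univ i, h⟩)
      exact sup_le (le_sup_left.trans hle) le_sup_left
  refine ⟨b, le_antisymm (sup_le ?_ le_sup_right) (sup_le_sup_right ?_ A)⟩
  · calc rspan b₁ ⊔ rspan b₂ ≤ ⨅ i, (rspan b ⊔ F i) := le_iInf hlocal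
      _ ≤ rspan b ⊔ ⨅ i, F i := hco.iInf_sup_le htwo _
      _ ≤ rspan b ⊔ A := sup_le_sup_left hA _
  · exact (Submodule.span_singleton_le_iff_mem _ _).2 hb

lemma exists_sup_span_singleton_eq_of_rspan_sup_eq {A : Submodule Rᵐᵒᵖ R}
    (h : ∀ b₁ b₂ : R, ∃ b, rspan b₁ ⊔ rspan b₂ ⊔ A = rspan b ⊔ A) (x y : R ⧸ A) :
    ∃ z, Submodule.span Rᵐᵒᵖ {x} ⊔ Submodule.span Rᵐᵒᵖ {y} = Submodule.span Rᵐᵒᵖ {z} := by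
  obtain ⟨b₁, rfl⟩ := Submodule.Quotient.mk_surjective A x
  obtain ⟨b₂, rfl⟩ := Submodule.Quotient.mk_surjective A y
  obtain ⟨b, hb⟩ := h b₁ b₂
  refine ⟨Submodule.Quotient.mk b, ?_⟩
  simpa [rspan, Submodule.map_sup, Submodule.mkQ_map_self, Submodule.map_span] using
    congrArg (Submodule.map A.mkQ) hb

end RightIdeals

theorem statement14_general {R : Type u} [Ring R]
    (A : Submodule Rᵐᵒᵖ R) (hA : HasSerialFact A) :
    ∀ N : Submodule Rᵐᵒᵖ (R ⧸ A), N.FG → ∃ x : R ⧸ A, N = Submodule.span Rᵐᵒᵖ {x} := by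
  obtain ⟨n, F, -, hcomm, hco, huni, rfl⟩ := hA
  intro N hN
  refine exists_eq_span_singleton_of_fg ?_ hN
  rcases eq_or_ne n 1 with rfl | hn
  · exact (huni 0).exists_sup_span_singleton_eq
  · have htwo : ∀ i, IsTwoSidedRid (F i) := fun i => by
      have : Nontrivial (Fin n) := Fin.nontrivial_iff_two_le.2 (by have := i.pos; omega)
      obtain ⟨j, hj⟩ := exists_ne i
      exact hco.isTwoSidedRid hcomm hj.symm
    exact exists_sup_span_singleton_eq_of_rspan_sup_eq
      (exists_rspan_sup_eq hco htwo huni (hco.iInf_le_rprod_ofFn htwo hcomm))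

/-- Proposition 3.5: if a right ideal `A` has a serial factorization, then `R/A` is a Bézout
right `R`-module: every finitely generated submodule is cyclic. -/
theorem statement14 {R : Type u} [Ring R] [Nontrivial R]
    (A : Submodule Rᵐᵒᵖ R) (hA : HasSerialFact A) :
    ∀ N : Submodule Rᵐᵒᵖ (R ⧸ A), N.FG → ∃ x : R ⧸ A, N = Submodule.span Rᵐᵒᵖ {x} :=
  statement14_general A hA
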